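/- Let q(x) = 1 − 2x² on [-1,1]. The scaling function s_q of q exists on the dual Cantor set C*, and s_q(a*) = 1/2 for every a* in B, while s_q(a*) ≠ 1/2 for every a* in A. -/

import Mathlib

open Set MeasureTheory Filter Topology

noncomputable def len (s : Set ℝ) : ℝ := (volume s).toReal

noncomputable def branch (f : ℝ → ℝ) : Bool → ℝ → ℝ
  | false => Function.invFunOn f (Icc (-1) 0)
  | true => Function.invFunOn f (Icc 0 1)

noncomputable def gw (f : ℝ → ℝ) : List Bool → ℝ → ℝ
  | [] => id
  | b :: w => branch f b ∘ gw f w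

noncomputable def Iw (f : ℝ → ℝ) (w : List Bool) : Set ℝ := gw f w '' Icc (-1) 1

def word (a : ℕ → Bool) (n : ℕ) : List Bool := ((List.range (n + 1)).reverse).map a

noncomputable def ratio (f : ℝ → ℝ) (a : ℕ → Bool) (n : ℕ) : ℝ :=
  len (Iw f (word a n)) / len (Iw f ((word a n).dropLast))

def IsScalingFun (f : ℝ → ℝ) (s : (ℕ → Bool) → ℝ) : Prop :=
  ∀ a : ℕ → Bool, Tendsto (ratio f a) atTop (nhds (s a))

def HolderOnDual (s : (ℕ → Bool) → ℝ) : Prop :=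
  ∃ C > (0:ℝ), ∃ lam ∈ Ioo (0:ℝ) 1, ∀ a b : ℕ → Bool, ∀ n : ℕ,
    (∀ k < n, a k = b k) → |s a - s b| ≤ C * lam ^ n

def EvZero (a : ℕ → Bool) : Prop := ∃ N, ∀ n ≥ N, a n = false

def Lambda (f : ℝ → ℝ) : Set ℝ := {x | ∀ n : ℕ, f^[n] x ∈ Icc (-1) 1}

structure GoodFamily where
  eps0 : ℝ
  eps0_pos : 0 < eps0
  f : ℝ → ℝ → ℝ
  f' : ℝ → ℝ → ℝ
  gamma : ℝ
  one_lt_gamma : 1 < gamma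
  mono : ∀ ε ∈ Icc 0 eps0, StrictMonoOn (f ε) (Icc (-1) 0)
  anti : ∀ ε ∈ Icc 0 eps0, StrictAntiOn (f ε) (Icc 0 1)
  map_neg_one : ∀ ε ∈ Icc 0 eps0, f ε (-1) = -1
  map_one : ∀ ε ∈ Icc 0 eps0, f ε 1 = -1
  map_zero : ∀ ε ∈ Icc 0 eps0, f ε 0 = 1 + ε
  smooth : ContDiffOn ℝ 1 (fun p : ℝ × ℝ => f p.1 p.2) (Icc 0 eps0 ×ˢ Icc (-1) 1)
  deriv_f : ∀ ε ∈ Icc 0 eps0, ∀ x ∈ Icc (-1:ℝ) 1,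
    HasDerivWithinAt (f ε) (f' ε x) (Icc (-1) 1) x
  Rneg : ℝ → ℝ → ℝ
  Rpos : ℝ → ℝ → ℝ
  Rneg_cont : ContinuousOn (fun p : ℝ × ℝ => Rneg p.1 p.2) (Icc 0 eps0 ×ˢ Icc (-1) 0)
  Rpos_cont : ContinuousOn (fun p : ℝ × ℝ => Rpos p.1 p.2) (Icc 0 eps0 ×ˢ Icc 0 1)
  Rneg_ne : ∀ ε ∈ Icc 0 eps0, ∀ x ∈ Icc (-1:ℝ) 0, Rneg ε x ≠ 0
  Rpos_ne : ∀ ε ∈ Icc 0 eps0, ∀ x ∈ Icc (0:ℝ) 1, Rpos ε x ≠ 0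
  Rneg_eq : ∀ ε ∈ Icc 0 eps0, ∀ x ∈ Ico (-1:ℝ) 0, Rneg ε x = f' ε x / |x| ^ (gamma - 1)
  Rpos_eq : ∀ ε ∈ Icc 0 eps0, ∀ x ∈ Ioc (0:ℝ) 1, Rpos ε x = f' ε x / |x| ^ (gamma - 1)
  K' : ℝ
  K'_pos : 0 < K'
  alpha' : ℝ
  alpha'_mem : alpha' ∈ Ioc (0:ℝ) 1
  holder' : ∀ ε ∈ Icc 0 eps0, ∀ x ∈ Icc (-1:ℝ) 1, ∀ y ∈ Icc (-1:ℝ) 1,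
    |f' ε x - f' ε y| ≤ K' * |x - y| ^ alpha'
  K'' : ℝ
  K''_pos : 0 < K''
  alpha'' : ℝ
  alpha''_mem : alpha'' ∈ Ioc (0:ℝ) 1
  holder''_neg : ∀ ε ∈ Icc 0 eps0, ∀ x ∈ Ico (-1:ℝ) 0, ∀ y ∈ Ico (-1:ℝ) 0,
    |f' ε x / |x| ^ (gamma - 1) - f' ε y / |y| ^ (gamma - 1)| ≤ K'' * |x - y| ^ alpha''
  holder''_pos : ∀ ε ∈ Icc 0 eps0, ∀ x ∈ Ioc (0:ℝ) 1, ∀ y ∈ Ioc (0:ℝ) 1,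
    |f' ε x / |x| ^ (gamma - 1) - f' ε y / |y| ^ (gamma - 1)| ≤ K'' * |x - y| ^ alpha''
  C0 : ℝ
  C0_pos : 0 < C0
  lam : ℝ
  lam_mem : lam ∈ Ioo (0:ℝ) 1
  decay : ∀ ε ∈ Icc 0 eps0, ∀ n : ℕ, 1 ≤ n → ∀ w : List Bool, w.length = n + 1 →
    len (Iw (f ε) w) ≤ C0 * lam ^ n

noncomputable def q : ℝ → ℝ := fun x => 1 - 2 * x ^ 2

/-!
The map `q` is conjugate to the tent map: `h u = -cos (π u)` maps `[0, 1]` increasingly onto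
`[-1, 1]` and `q (h u) = h (2 u) = h (2 - 2 u)`, so the inverse branches of `q` satisfy
`g_b ∘ h = h ∘ τ_b` with `τ₀ u = u / 2` and `τ₁ u = 1 - u / 2`. Hence `I_w = h (J_w)`, where
`J_w` is an interval of length `2⁻ⁿ` (`n = |w|`) with midpoint `m_w`, and
`|I_w| = 2 sin (π m_w) sin (π 2⁻ⁿ⁻¹)`. The ratio `s(wₙi)` therefore splits as
`sin (π m) / sin (π m')` times `sin (π 2⁻ⁿ⁻²) / sin (π 2⁻ⁿ⁻¹) → 1/2`, where `m`, `m'` are the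
midpoints of the child and the parent interval, `|m - m'| = 2⁻ⁿ⁻²`. If `a*` has infinitely many
ones, `2ⁿ · dist (m', {0, 1}) → ∞`, so the first factor tends to `1`. If `a*` is eventually zero,
`m` and `m'` are eventually halved at each step, and the first factor tends to the ratio
`m / m' ≠ 1` of their values at that time.
-/

open Real

section Trigonometric

lemma two_mul_min_le_sin_pi_mul {y : ℝ} (hy : y ∈ Icc (0 : ℝ) 1) :
    2 * min y (1 - y) ≤ sin (π * y) := by
  have hsymm : sin (π * y) = sin (π * min y (1 - y)) := by
    rcases le_total y (1 - y) with h | h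
    · rw [min_eq_left h]
    · rw [min_eq_right h, mul_one_sub, sin_pi_sub]
  have h0 : 0 ≤ min y (1 - y) := le_min hy.1 (by linarith [hy.2])
  have h1 : min y (1 - y) ≤ 1 / 2 := by
    rcases le_total y (1 - y) with h | h <;> simp only [min_eq_left, min_eq_right, h] <;> linarith
  rw [hsymm]
  calc 2 * min y (1 - y) = 2 / π * (π * min y (1 - y)) := by field_simp
    _ ≤ sin (π * min y (1 - y)) := mul_le_sin (by positivity) (by nlinarith [pi_pos])

lemma tendsto_sin_pi_mul_div_sin_pi_mul {ι : Type*} {l : Filter ι} {x y : ι → ℝ}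
    (hy : ∀ i, y i ∈ Ioo (0 : ℝ) 1)
    (h : Tendsto (fun i => |x i - y i| / min (y i) (1 - y i)) l (𝓝 0)) :
    Tendsto (fun i => sin (π * x i) / sin (π * y i)) l (𝓝 1) := by
  rw [tendsto_iff_dist_tendsto_zero]
  refine squeeze_zero (fun _ => dist_nonneg) (fun i => ?_) (by simpa using h.const_mul (π / 2))
  have hd : 0 < min (y i) (1 - y i) := lt_min (hy i).1 (sub_pos.2 (hy i).2)
  have hs := two_mul_min_le_sin_pi_mul (Ioo_subset_Icc_self (hy i))
  have hs0 : 0 < sin (π * y i) := by linarith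
  have hnum : |sin (π * x i) - sin (π * y i)| ≤ π * |x i - y i| := by
    simpa only [← mul_sub, abs_mul, abs_of_pos pi_pos] using abs_sin_sub_sin_le (π * x i) (π * y i)
  rw [dist_eq, div_sub_one hs0.ne', abs_div, abs_of_pos hs0]
  calc |sin (π * x i) - sin (π * y i)| / sin (π * y i)
      ≤ π * |x i - y i| / (2 * min (y i) (1 - y i)) :=
        div_le_div₀ (by positivity) hnum (by positivity) hs
    _ = π / 2 * (|x i - y i| / min (y i) (1 - y i)) := by field_simp

lemma mul_sinc_mul {x : ℝ} (c : ℝ) (hx : x ≠ 0) : c * sinc (c * x) = sin (c * x) / x := by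
  rcases eq_or_ne c 0 with rfl | hc
  · simp
  · rw [sinc_of_ne_zero (mul_ne_zero hc hx)]
    field_simp

lemma tendsto_sin_mul_div_sin_mul {ι : Type*} {l : Filter ι} {x : ι → ℝ}
    (hx : Tendsto x l (𝓝[≠] 0)) (c : ℝ) {d : ℝ} (hd : d ≠ 0) :
    Tendsto (fun i => sin (c * x i) / sin (d * x i)) l (𝓝 (c / d)) := by
  have hsinc (e : ℝ) : Tendsto (fun i => e * sinc (e * x i)) l (𝓝 e) := by
    have hex : Tendsto (fun i => e * x i) l (𝓝 0) := by
      simpa using (hx.mono_right nhdsWithin_le_nhds).const_mul e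
    simpa [sinc_zero] using ((continuous_sinc.tendsto 0).comp hex).const_mul e
  refine ((hsinc c).div (hsinc d) hd).congr' ?_
  filter_upwards [hx self_mem_nhdsWithin] with i (hi : x i ≠ 0)
  rw [Pi.div_apply, mul_sinc_mul c hi, mul_sinc_mul d hi, div_div_div_cancel_right₀ hi]

lemma tendsto_inv_two_pow_nhdsNE : Tendsto (fun n : ℕ => ((2 : ℝ) ^ n)⁻¹) atTop (𝓝[≠] 0) :=
  (tendsto_inv_atTop_nhdsGT_zero.comp (tendsto_pow_atTop_atTop_of_one_lt one_lt_two)).mono_right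
    (nhdsWithin_mono _ fun _ hx => ne_of_gt hx)

lemma tendsto_sin_pi_div_two_pow_ratio :
    Tendsto (fun n : ℕ => sin (π / 2 ^ (n + 2)) / sin (π / 2 ^ (n + 1))) atTop (𝓝 (1 / 2)) := by
  have h := tendsto_sin_mul_div_sin_mul tendsto_inv_two_pow_nhdsNE (π / 4) (d := π / 2)
    (by positivity)
  rw [show π / 4 / (π / 2) = 1 / 2 by field_simp; norm_num] at h
  refine h.congr fun n => ?_
  congr 2 <;> ring

end Trigonometric

section Tent

noncomputable def tentBranch (b : Bool) (u : ℝ) : ℝ := if b then 1 - u / 2 else u / 2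

noncomputable def tentWord : List Bool → ℝ → ℝ
  | [] => id
  | b :: w => tentBranch b ∘ tentWord w

lemma tentWord_append_singleton (w : List Bool) (b : Bool) :
    tentWord (w ++ [b]) = tentWord w ∘ tentBranch b := by
  induction w with
  | nil => rfl
  | cons c w ih => simp only [List.cons_append, tentWord, ih, Function.comp_assoc]

lemma tentBranch_mem_Icc (b : Bool) {u : ℝ} (hu : u ∈ Icc (0 : ℝ) 1) :
    tentBranch b u ∈ Icc (0 : ℝ) 1 := by
  obtain ⟨h0, h1⟩ := hu
  cases b <;> simp only [tentBranch, Bool.false_eq_true, if_true, if_false, mem_Icc] <;>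
    constructor <;> linarith

lemma tentBranch_mem_Ioo (b : Bool) {u : ℝ} (hu : u ∈ Ioo (0 : ℝ) 1) :
    tentBranch b u ∈ Ioo (0 : ℝ) 1 := by
  obtain ⟨h0, h1⟩ := hu
  cases b <;> simp only [tentBranch, Bool.false_eq_true, if_true, if_false, mem_Ioo] <;>
    constructor <;> linarith

lemma tentWord_mem_Icc (w : List Bool) {u : ℝ} (hu : u ∈ Icc (0 : ℝ) 1) :
    tentWord w u ∈ Icc (0 : ℝ) 1 := by
  induction w with
  | nil => exact hu
  | cons b w ih => exact tentBranch_mem_Icc b ih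

lemma tentWord_mem_Ioo (w : List Bool) {u : ℝ} (hu : u ∈ Ioo (0 : ℝ) 1) :
    tentWord w u ∈ Ioo (0 : ℝ) 1 := by
  induction w with
  | nil => exact hu
  | cons b w ih => exact tentBranch_mem_Ioo b ih

lemma tentWord_image_uIcc (w : List Bool) (x y : ℝ) :
    tentWord w '' uIcc x y = uIcc (tentWord w x) (tentWord w y) := by
  induction w with
  | nil => exact image_id _
  | cons b w ih =>
    rw [tentWord, image_comp, ih]
    cases b
    · exact image_div_const_uIcc 2 _ _
    · change ((fun v => 1 - v) ∘ fun v => v / 2) '' _ = _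
      rw [image_comp, image_div_const_uIcc, image_const_sub_uIcc]
      rfl

lemma tentWord_midpoint (w : List Bool) (x y : ℝ) :
    tentWord w ((x + y) / 2) = (tentWord w x + tentWord w y) / 2 := by
  induction w with
  | nil => rfl
  | cons b w ih =>
    simp only [tentWord, Function.comp_apply, ih]
    cases b <;> simp only [tentBranch, Bool.false_eq_true, if_true, if_false] <;> ring

lemma abs_tentWord_sub (w : List Bool) (x y : ℝ) :
    |tentWord w x - tentWord w y| = |x - y| / 2 ^ w.length := by
  induction w with
  | nil => simp [tentWord]
  | cons b w ih =>
    have hb : |tentBranch b (tentWord w x) - tentBranch b (tentWord w y)|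
        = |tentWord w x - tentWord w y| / 2 := by
      cases b <;> simp only [tentBranch, Bool.false_eq_true, if_true, if_false]
      · rw [← sub_div, abs_div, abs_two]
      · rw [sub_sub_sub_cancel_left, ← sub_div, abs_div, abs_sub_comm, abs_two]
    simp only [tentWord, Function.comp_apply, hb, ih, List.length_cons, pow_succ, div_div]

lemma half_le_tentBranch (b : Bool) {u : ℝ} (hu : u ≤ 1) : u / 2 ≤ tentBranch b u := by
  cases b <;> simp only [tentBranch, Bool.false_eq_true, if_true, if_false] <;> linarith

lemma min_tentBranch_one_sub (b : Bool) {u : ℝ} (hu : u ∈ Icc (0 : ℝ) 1) :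
    min (tentBranch b u) (1 - tentBranch b u) = u / 2 := by
  obtain ⟨h0, h1⟩ := hu
  cases b <;> simp only [tentBranch, Bool.false_eq_true, if_true, if_false]
  · exact min_eq_left (by linarith)
  · rw [sub_sub_cancel]; exact min_eq_right (by linarith)

section Orbit

variable {b : ℕ → Bool} {z : ℕ → ℝ}

-- `2ⁿ⁺¹ · dist (zₙ₊₁, {0, 1}) = 2ⁿ zₙ`, and `2ⁿ zₙ` is nondecreasing and `≥ 2ⁿ⁻¹` when `bₙ = 1`.
lemma tendsto_two_pow_mul_min_of_frequently (hz01 : ∀ n, z n ∈ Icc (0 : ℝ) 1)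
    (hz : ∀ n, z (n + 1) = tentBranch (b (n + 1)) (z n)) (hb : ∃ᶠ n in atTop, b n = true) :
    Tendsto (fun n => 2 ^ n * min (z n) (1 - z n)) atTop atTop := by
  have hdist (n : ℕ) : 2 ^ (n + 1) * min (z (n + 1)) (1 - z (n + 1)) = 2 ^ n * z n := by
    rw [hz, min_tentBranch_one_sub _ (hz01 n), pow_succ]; ring
  have hmono : Monotone fun n => (2 : ℝ) ^ n * z n := monotone_nat_of_le_succ fun n => by
    have := half_le_tentBranch (b (n + 1)) (hz01 n).2
    rw [hz, pow_succ]; nlinarith [pow_pos (two_pos (α := ℝ)) n]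
  have hunbdd (K : ℝ) : ∃ n, K ≤ 2 ^ n * z n := by
    obtain ⟨N, hN⟩ := pow_unbounded_of_one_lt K one_lt_two
    obtain ⟨n, hn, hbn⟩ := frequently_atTop.1 hb (N + 1)
    obtain ⟨m, rfl⟩ : ∃ m, n = m + 1 := ⟨n - 1, by omega⟩
    refine ⟨m + 1, ?_⟩
    have h2N : (2 : ℝ) ^ N ≤ 2 ^ m := pow_le_pow_right₀ one_le_two (by omega)
    have := (hz01 m).2
    rw [hz, hbn, tentBranch, if_pos rfl, pow_succ]
    nlinarith [pow_pos (two_pos (α := ℝ)) m]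
  rw [← tendsto_add_atTop_iff_nat 1]
  simpa only [hdist] using tendsto_atTop_atTop_of_monotone hmono hunbdd

lemma eq_div_two_pow_of_forall_ge_eq_false {N : ℕ}
    (hz : ∀ n, z (n + 1) = tentBranch (b (n + 1)) (z n)) (hb : ∀ n ≥ N, b n = false) (n : ℕ) :
    z (n + N) = z N / 2 ^ n := by
  induction n with
  | zero => simp
  | succ n ih =>
    rw [show n + 1 + N = n + N + 1 by ring, hz, hb _ (by omega), ih, tentBranch, if_neg (by simp),
      pow_succ, div_div]

end Orbit

end Tent

section Conjugacy

noncomputable def negCosPi (u : ℝ) : ℝ := -cos (π * u)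

lemma negCosPi_two_mul (u : ℝ) : negCosPi (2 * u) = q (negCosPi u) := by
  simp only [negCosPi, q, mul_left_comm π 2, cos_two_mul]; ring

lemma q_negCosPi_tentBranch (b : Bool) (u : ℝ) : q (negCosPi (tentBranch b u)) = negCosPi u := by
  rw [← negCosPi_two_mul]
  cases b <;> simp only [negCosPi, tentBranch, Bool.false_eq_true, if_true, if_false]
  · rw [mul_div_cancel₀ u two_ne_zero]
  · rw [show π * (2 * (1 - u / 2)) = 2 * π - π * u by ring, cos_two_pi_sub]

lemma monotoneOn_negCosPi : MonotoneOn negCosPi (Icc 0 1) := fun x hx y hy hxy =>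
  neg_le_neg <| strictAntiOn_cos.antitoneOn
    ⟨by nlinarith [pi_pos, hx.1], by nlinarith [pi_pos, hx.2]⟩
    ⟨by nlinarith [pi_pos, hy.1], by nlinarith [pi_pos, hy.2]⟩
    (mul_le_mul_of_nonneg_left hxy pi_pos.le)

lemma continuous_negCosPi : Continuous negCosPi := by
  unfold negCosPi; fun_prop

lemma negCosPi_image_uIcc {x y : ℝ} (hx : x ∈ Icc (0 : ℝ) 1) (hy : y ∈ Icc (0 : ℝ) 1) :
    negCosPi '' uIcc x y = uIcc (negCosPi x) (negCosPi y) :=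
  continuous_negCosPi.continuousOn.image_uIcc_of_monotoneOn
    (monotoneOn_negCosPi.mono (uIcc_subset_Icc hx hy))

lemma negCosPi_mem_Icc {x y u : ℝ} (hx : 0 ≤ x) (hy : y ≤ 1) (hu : u ∈ Icc x y) :
    negCosPi u ∈ Icc (negCosPi x) (negCosPi y) :=
  (monotoneOn_negCosPi.mono (Icc_subset_Icc hx hy)).image_Icc_subset (mem_image_of_mem _ hu)

lemma negCosPi_zero : negCosPi 0 = -1 := by simp [negCosPi]

lemma negCosPi_half : negCosPi (1 / 2) = 0 := by
  rw [negCosPi, mul_one_div, cos_pi_div_two, neg_zero]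

lemma negCosPi_one : negCosPi 1 = 1 := by simp [negCosPi]

lemma injOn_q_Icc_neg_one_zero : InjOn q (Icc (-1) 0) := fun x hx y hy h => by
  simp only [q] at h
  nlinarith [hx.2, hy.2]

lemma injOn_q_Icc_zero_one : InjOn q (Icc 0 1) := fun x hx y hy h => by
  simp only [q] at h
  nlinarith [hx.1, hy.1]

lemma branch_q_negCosPi (b : Bool) {u : ℝ} (hu : u ∈ Icc (0 : ℝ) 1) :
    branch q b (negCosPi u) = negCosPi (tentBranch b u) := by
  rw [← q_negCosPi_tentBranch b u]
  obtain ⟨h0, h1⟩ := hu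
  cases b <;> simp only [branch, tentBranch, Bool.false_eq_true, if_true, if_false]
  · refine injOn_q_Icc_neg_one_zero.leftInvOn_invFunOn ?_
    have h := negCosPi_mem_Icc le_rfl (by norm_num)
      (show u / 2 ∈ Icc 0 (1 / 2) from ⟨by linarith, by linarith⟩)
    rwa [negCosPi_zero, negCosPi_half] at h
  · refine injOn_q_Icc_zero_one.leftInvOn_invFunOn ?_
    have h := negCosPi_mem_Icc (by norm_num) le_rfl
      (show 1 - u / 2 ∈ Icc (1 / 2) 1 from ⟨by linarith, by linarith⟩)
    rwa [negCosPi_half, negCosPi_one] at h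

lemma gw_q_negCosPi (w : List Bool) {u : ℝ} (hu : u ∈ Icc (0 : ℝ) 1) :
    gw q w (negCosPi u) = negCosPi (tentWord w u) := by
  induction w with
  | nil => rfl
  | cons b w ih =>
    simp only [gw, tentWord, Function.comp_apply, ih, branch_q_negCosPi b (tentWord_mem_Icc w hu)]

lemma Iw_q_eq (w : List Bool) :
    Iw q w = uIcc (negCosPi (tentWord w 0)) (negCosPi (tentWord w 1)) := by
  have h01 : uIcc (0 : ℝ) 1 = Icc 0 1 := uIcc_of_le zero_le_one
  have hI : Icc (-1 : ℝ) 1 = negCosPi '' uIcc 0 1 := by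
    rw [negCosPi_image_uIcc (by norm_num) (by norm_num), negCosPi_zero, negCosPi_one,
      uIcc_of_le (by norm_num)]
  rw [Iw, hI, image_image, image_congr fun u hu => gw_q_negCosPi w (h01 ▸ hu), ← image_image,
    tentWord_image_uIcc, negCosPi_image_uIcc (tentWord_mem_Icc w (by norm_num))
      (tentWord_mem_Icc w (by norm_num))]

end Conjugacy

lemma len_Iw_q (w : List Bool) :
    len (Iw q w) = 2 * sin (π * tentWord w (1 / 2)) * sin (π / 2 ^ (w.length + 1)) := by
  have hmid : (π * tentWord w 0 + π * tentWord w 1) / 2 = π * tentWord w (1 / 2) := by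
    rw [show (1 / 2 : ℝ) = (0 + 1) / 2 by norm_num, tentWord_midpoint]; ring
  have hwidth : |(π * tentWord w 0 - π * tentWord w 1) / 2| = π / 2 ^ (w.length + 1) := by
    rw [← mul_sub, abs_div, abs_mul, abs_tentWord_sub, abs_of_pos pi_pos, abs_two, zero_sub,
      abs_neg, abs_one, pow_succ]
    ring
  have hsin_mid : 0 ≤ sin (π * tentWord w (1 / 2)) := by
    obtain ⟨h0, h1⟩ := tentWord_mem_Icc w (show (1 / 2 : ℝ) ∈ Icc 0 1 by norm_num)
    exact sin_nonneg_of_nonneg_of_le_pi (by positivity) (by nlinarith [pi_pos])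
  have hwidth_le : |(π * tentWord w 0 - π * tentWord w 1) / 2| ≤ π :=
    hwidth ▸ div_le_self pi_pos.le (one_le_pow₀ one_le_two)
  rw [len, Iw_q_eq, Real.volume_interval, ENNReal.toReal_ofReal (abs_nonneg _), negCosPi,
    negCosPi, neg_sub_neg, cos_sub_cos, abs_mul, abs_mul, hmid, abs_of_nonneg hsin_mid,
    abs_sin_eq_sin_abs_of_abs_le_pi hwidth_le, hwidth, abs_neg, abs_two]

lemma word_succ (a : ℕ → Bool) (n : ℕ) : word a (n + 1) = a (n + 1) :: word a n := by
  simp [word, List.range_succ]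

lemma length_word (a : ℕ → Bool) (n : ℕ) : (word a n).length = n + 1 := by
  simp [word]

lemma dropLast_word_succ (a : ℕ → Bool) (n : ℕ) :
    (word a (n + 1)).dropLast = a (n + 1) :: (word a n).dropLast := by
  rw [word_succ, List.dropLast_cons_of_ne_nil (List.ne_nil_of_length_pos (by simp [length_word]))]

lemma dropLast_word_append (a : ℕ → Bool) (n : ℕ) : (word a n).dropLast ++ [a 0] = word a n := by
  induction n with
  | zero => rfl
  | succ n ih => rw [dropLast_word_succ, List.cons_append, ih, word_succ]

section Midpoints

variable (a : ℕ → Bool)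

noncomputable def childMid (n : ℕ) : ℝ := tentWord (word a n) (1 / 2)

noncomputable def parentMid (n : ℕ) : ℝ := tentWord (word a n).dropLast (1 / 2)

lemma childMid_succ (n : ℕ) : childMid a (n + 1) = tentBranch (a (n + 1)) (childMid a n) := by
  rw [childMid, word_succ]; rfl

lemma parentMid_succ (n : ℕ) : parentMid a (n + 1) = tentBranch (a (n + 1)) (parentMid a n) := by
  rw [parentMid, dropLast_word_succ]; rfl

lemma parentMid_mem_Ioo (n : ℕ) : parentMid a n ∈ Ioo (0 : ℝ) 1 :=
  tentWord_mem_Ioo _ (by norm_num)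

lemma abs_childMid_sub_parentMid (n : ℕ) : |childMid a n - parentMid a n| = 1 / 2 ^ (n + 2) := by
  have hb : |tentBranch (a 0) (1 / 2) - 1 / 2| = 1 / 4 := by
    cases a 0 <;> norm_num [tentBranch]
  have hchild : childMid a n = tentWord (word a n).dropLast (tentBranch (a 0) (1 / 2)) := by
    rw [← Function.comp_apply (f := tentWord _), ← tentWord_append_singleton,
      dropLast_word_append, childMid]
  rw [hchild, parentMid, abs_tentWord_sub, hb, List.length_dropLast, length_word,
    Nat.add_sub_cancel, pow_add]
  ring

lemma ratio_q_eq (n : ℕ) : ratio q a n =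
    sin (π * childMid a n) / sin (π * parentMid a n) *
      (sin (π / 2 ^ (n + 2)) / sin (π / 2 ^ (n + 1))) := by
  rw [ratio, len_Iw_q, len_Iw_q, List.length_dropLast, length_word, Nat.add_sub_cancel,
    mul_assoc, mul_assoc, mul_div_mul_left _ _ two_ne_zero, mul_div_mul_comm]
  rfl

lemma tendsto_sin_childMid_div_of_not_evZero (h : ¬ EvZero a) :
    Tendsto (fun n => sin (π * childMid a n) / sin (π * parentMid a n)) atTop (𝓝 1) := by
  have hfreq : ∃ᶠ n in atTop, a n = true := by
    simpa [EvZero, ← eventually_atTop, not_eventually] using h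
  have hgrowth := tendsto_two_pow_mul_min_of_frequently
    (fun n => Ioo_subset_Icc_self (parentMid_mem_Ioo a n)) (parentMid_succ a) hfreq
  refine tendsto_sin_pi_mul_div_sin_pi_mul (parentMid_mem_Ioo a) ?_
  have := (tendsto_inv_atTop_zero.comp hgrowth).const_mul (1 / 4)
  rw [mul_zero] at this
  refine this.congr fun n => ?_
  rw [Function.comp_apply, abs_childMid_sub_parentMid, pow_add]
  field_simp
  ring

lemma exists_tendsto_sin_childMid_div_of_evZero (h : EvZero a) : ∃ c ≠ 1,
    Tendsto (fun n => sin (π * childMid a n) / sin (π * parentMid a n)) atTop (𝓝 c) := by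
  obtain ⟨N, hN⟩ := h
  have hpos := (parentMid_mem_Ioo a N).1
  refine ⟨childMid a N / parentMid a N, fun heq => ?_, ?_⟩
  · have hsub := abs_childMid_sub_parentMid a N
    rw [(div_eq_one_iff_eq hpos.ne').1 heq, sub_self, abs_zero] at hsub
    exact absurd hsub.symm (by positivity)
  · rw [← tendsto_add_atTop_iff_nat N]
    have := tendsto_sin_mul_div_sin_mul tendsto_inv_two_pow_nhdsNE (π * childMid a N)
      (d := π * parentMid a N) (by positivity)
    rw [mul_div_mul_left _ _ pi_ne_zero] at this
    refine this.congr fun n => ?_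
    rw [eq_div_two_pow_of_forall_ge_eq_false (childMid_succ a) hN,
      eq_div_two_pow_of_forall_ge_eq_false (parentMid_succ a) hN]
    simp only [div_eq_mul_inv, mul_assoc]

theorem exists_tendsto_ratio_q :
    ∃ L, Tendsto (ratio q a) atTop (𝓝 L) ∧ (L = 1 / 2 ↔ ¬ EvZero a) := by
  simp only [funext (ratio_q_eq a)]
  by_cases h : EvZero a
  · obtain ⟨c, hc, hlim⟩ := exists_tendsto_sin_childMid_div_of_evZero a h
    refine ⟨c * (1 / 2), hlim.mul tendsto_sin_pi_div_two_pow_ratio, ?_⟩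
    simpa [h] using hc
  · exact ⟨1 * (1 / 2), (tendsto_sin_childMid_div_of_not_evZero a h).mul
      tendsto_sin_pi_div_two_pow_ratio, by simp [h]⟩

end Midpoints

/-- Proposition 2: the scaling function `s_q` of `q(x) = 1 - 2x²` exists on
the dual Cantor set, equals `1/2` at every point of `ℬ`, and differs from `1/2` at every
point of `𝒜`. -/
theorem scaling_function_of_ulam_von_neumann :
    ∃ s : (ℕ → Bool) → ℝ, IsScalingFun q s ∧
      (∀ a : ℕ → Bool, ¬ EvZero a → s a = 1 / 2) ∧
      (∀ a : ℕ → Bool, EvZero a → s a ≠ 1 / 2) := by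
  choose s hs using exists_tendsto_ratio_q
  exact ⟨s, fun a => (hs a).1, fun a h => (hs a).2.2 h, fun a h heq => (hs a).2.1 heq h⟩
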